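/- arXiv:1702.03801 — 5 statements merged into one kernel-verified Lean document; each statement's English description precedes it below -/
import Mathlib

section
/- Let (X, {R_0,...,R_d}) be a symmetric association scheme, let i ∈ {1,...,d}, and let Γ = (X, R_i). If a and b are twins in Γ (a ≠ b and Γ(a) = Γ(b)), then there exists a nonempty subset S ⊆ {1,...,d} such that the connected components of the graph (X, ⋃_{j∈S} R_j) form a nontrivial partition of X (i.e., some component has more than one vertex and no component equals all of X) and a and b lie in the same component. -/
/-- A symmetric association scheme with `d` classes on a finite vertex set `X`:
a partition of `X × X` into nonempty symmetric relations `R 0, …, R d`, where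
`R 0` is the identity relation, together with intersection numbers `p i j k`. -/
structure SymAssocScheme (X : Type*) [Fintype X] (d : ℕ) where
  R : Fin (d + 1) → X → X → Prop
  R_nonempty : ∀ i, ∃ a b, R i a b
  R_symm : ∀ i a b, R i a b → R i b a
  R_zero : ∀ a b, R 0 a b ↔ a = b
  R_unique : ∀ a b, ∃! i, R i a b
  p : Fin (d + 1) → Fin (d + 1) → Fin (d + 1) → ℕ
  p_spec : ∀ (i j k : Fin (d + 1)) (a b : X), R k a b →
    {c : X | R i a c ∧ R j c b}.ncard = p i j k

namespace SymAssocScheme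

variable {X : Type*} [Fintype X] {d : ℕ}

/-- The (simple) graph `Γ = (X, R_i)` of the basis relation `R_i`. -/
def graph (A : SymAssocScheme X d) (i : Fin (d + 1)) : SimpleGraph X where
  Adj a b := a ≠ b ∧ A.R i a b
  symm := ⟨fun a b h => ⟨h.1.symm, A.R_symm i a b h.2⟩⟩
  loopless := ⟨fun a h => h.1 rfl⟩

/-- The unweighted distribution diagram `H_i` (with loops discarded):
`j ~ k` iff `p i j k + p i k j > 0`. -/
def diagram (A : SymAssocScheme X d) (i : Fin (d + 1)) : SimpleGraph (Fin (d + 1)) where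
  Adj j k := j ≠ k ∧ 0 < A.p i j k + A.p i k j
  symm := ⟨fun j k h => ⟨h.1.symm, by omega⟩⟩
  loopless := ⟨fun j h => h.1 rfl⟩

end SymAssocScheme

namespace SymAssocScheme

variable {X : Type*} [Fintype X] {d : ℕ}

/-- The graph `(X, ⋃_{j ∈ S} R_j)` of a union of basis relations. -/
def unionGraph (A : SymAssocScheme X d) (S : Set (Fin (d + 1))) : SimpleGraph X where
  Adj x y := x ≠ y ∧ ∃ j ∈ S, A.R j x y
  symm := ⟨fun x y h => ⟨h.1.symm, h.2.choose, h.2.choose_spec.1,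
    A.R_symm _ x y h.2.choose_spec.2⟩⟩
  loopless := ⟨fun x h => h.1 rfl⟩

end SymAssocScheme

/-!
Let `N x` be the `R_i`-neighbourhood of `x`. For `(x, y) ∈ R_k` we have `|N x ∩ N y| = p_{ii}^k`
and `|N x| = p_{ii}^0`, so `N x = N y` exactly when `p_{ii}^k = p_{ii}^0`. Hence the union of the
classes `k ≠ 0` with `p_{ii}^k = p_{ii}^0` is the relation "distinct twins", whose components are
the twin classes. The twins `a, b` share a class, and not every vertex lies in one class because
`R_i` is nonempty and irreflexive.
-/

namespace SimpleGraph

variable {V : Type*} {G : SimpleGraph V}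

theorem Reachable.apply_eq {β : Type*} {f : V → β} (hf : ∀ ⦃x y⦄, G.Adj x y → f x = f y)
    {x y : V} (h : G.Reachable x y) : f x = f y :=
  Relation.reflTransGen_eq_self.le _ _ <|
    Relation.ReflTransGen.lift f hf _ _ ((reachable_iff_reflTransGen x y).1 h)

theorem Adj.connectedComponentMk_supp_nontrivial {a b : V} (h : G.Adj a b) :
    (G.connectedComponentMk a).supp.Nontrivial :=
  ⟨a, ConnectedComponent.connectedComponentMk_mem, b,
    (ConnectedComponent.mem_supp_congr_adj _ h).1 ConnectedComponent.connectedComponentMk_mem,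
    h.ne⟩

theorem ConnectedComponent.supp_ne_univ_of_not_reachable {x y : V} (h : ¬ G.Reachable x y)
    (c : G.ConnectedComponent) : c.supp ≠ Set.univ := fun hc =>
  h (c.reachable_of_mem_supp (hc ▸ Set.mem_univ x) (hc ▸ Set.mem_univ y))

end SimpleGraph

namespace SymAssocScheme

variable {X : Type*} [Fintype X] {d : ℕ} (A : SymAssocScheme X d)

theorem eq_of_R_of_R {j k : Fin (d + 1)} {x y : X} (hj : A.R j x y) (hk : A.R k x y) :
    j = k :=
  (A.R_unique x y).unique hj hk

theorem R_self_iff {k : Fin (d + 1)} {x : X} : A.R k x x ↔ k = 0 :=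
  ⟨fun h => A.eq_of_R_of_R h ((A.R_zero x x).2 rfl), fun h => h ▸ (A.R_zero x x).2 rfl⟩

def nbhd (i : Fin (d + 1)) (x : X) : Set X := {c | A.R i x c}

theorem graph_neighborSet {i : Fin (d + 1)} (hi : i ≠ 0) (x : X) :
    (A.graph i).neighborSet x = A.nbhd i x :=
  Set.ext fun _ => ⟨And.right, fun h => ⟨fun hxc => hi (A.R_self_iff.1 (hxc ▸ h)), h⟩⟩

theorem ncard_nbhd_inter_nbhd (i : Fin (d + 1)) {k : Fin (d + 1)} {x y : X} (h : A.R k x y) :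
    (A.nbhd i x ∩ A.nbhd i y).ncard = A.p i i k := by
  rw [← A.p_spec i i k x y h]
  congr 1
  ext c
  exact and_congr_right fun _ => ⟨A.R_symm i y c, A.R_symm i c y⟩

theorem ncard_nbhd (i : Fin (d + 1)) (x : X) : (A.nbhd i x).ncard = A.p i i 0 := by
  rw [← A.ncard_nbhd_inter_nbhd i ((A.R_zero x x).2 rfl), Set.inter_self]

theorem nbhd_eq_nbhd_iff (i : Fin (d + 1)) {k : Fin (d + 1)} {x y : X} (h : A.R k x y) :
    A.nbhd i x = A.nbhd i y ↔ A.p i i k = A.p i i 0 := by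
  constructor
  · intro hxy
    rw [← A.ncard_nbhd_inter_nbhd i h, hxy, Set.inter_self, ncard_nbhd]
  · intro hk
    have hcard : (A.nbhd i x ∩ A.nbhd i y).ncard = A.p i i 0 := by
      rw [A.ncard_nbhd_inter_nbhd i h, hk]
    have hx := Set.eq_of_subset_of_ncard_le Set.inter_subset_left
      (by rw [hcard, ncard_nbhd]) (Set.toFinite (A.nbhd i x))
    have hy := Set.eq_of_subset_of_ncard_le Set.inter_subset_right
      (by rw [hcard, ncard_nbhd]) (Set.toFinite (A.nbhd i y))
    rw [← hx, hy]

theorem exists_nbhd_ne {i : Fin (d + 1)} (hi : i ≠ 0) :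
    ∃ x y : X, A.nbhd i x ≠ A.nbhd i y := by
  obtain ⟨u, v, huv⟩ := A.R_nonempty i
  exact ⟨u, v, fun h => hi (A.R_self_iff.1 (show v ∈ A.nbhd i v from h ▸ huv))⟩

def twinClasses (i : Fin (d + 1)) : Set (Fin (d + 1)) := {k | k ≠ 0 ∧ A.p i i k = A.p i i 0}

theorem unionGraph_twinClasses_adj_iff (i : Fin (d + 1)) {x y : X} :
    (A.unionGraph (A.twinClasses i)).Adj x y ↔ x ≠ y ∧ A.nbhd i x = A.nbhd i y := by
  constructor
  · rintro ⟨hxy, k, ⟨-, hk⟩, hR⟩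
    exact ⟨hxy, (A.nbhd_eq_nbhd_iff i hR).2 hk⟩
  · rintro ⟨hxy, hN⟩
    obtain ⟨k, hR, -⟩ := A.R_unique x y
    have hk0 : k ≠ 0 := fun hk => hxy ((A.R_zero x y).1 (hk ▸ hR))
    exact ⟨hxy, k, ⟨hk0, (A.nbhd_eq_nbhd_iff i hR).1 hN⟩, hR⟩

end SymAssocScheme

open SymAssocScheme in
/-- Lemma 3.1: if `a` and `b` are twins in a basis relation `Γ = (X, R_i)` (`i ≠ 0`),
then the scheme is imprimitive: there is a nonempty set `S ⊆ {1, …, d}` such that the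
connected components of `(X, ⋃_{j ∈ S} R_j)` form a nontrivial partition of `X`
(some component is not a singleton, and no component is all of `X`), and `a` and `b`
lie in the same component. -/
theorem twins_imply_imprimitive {X : Type*} [Fintype X] {d : ℕ}
    (A : SymAssocScheme X d) (i : Fin (d + 1)) (hi : i ≠ 0)
    (a b : X) (hab : a ≠ b)
    (htwin : (A.graph i).neighborSet a = (A.graph i).neighborSet b) :
    ∃ S : Set (Fin (d + 1)), S.Nonempty ∧ (0 : Fin (d + 1)) ∉ S ∧
      (∃ c : (A.unionGraph S).ConnectedComponent, c.supp.Nontrivial) ∧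
      (∀ c : (A.unionGraph S).ConnectedComponent, c.supp ≠ Set.univ) ∧
      (A.unionGraph S).Reachable a b := by
  have hadj : (A.unionGraph (A.twinClasses i)).Adj a b := by
    rw [unionGraph_twinClasses_adj_iff, ← A.graph_neighborSet hi, ← A.graph_neighborSet hi]
    exact ⟨hab, htwin⟩
  obtain ⟨x, y, hxy⟩ := A.exists_nbhd_ne hi
  have hnot : ¬ (A.unionGraph (A.twinClasses i)).Reachable x y := fun h =>
    hxy (h.apply_eq fun _ _ h => ((A.unionGraph_twinClasses_adj_iff i).1 h).2)
  obtain ⟨k, hk, -⟩ := hadj.2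
  exact ⟨A.twinClasses i, ⟨k, hk⟩, fun h => h.1 rfl,
    ⟨_, hadj.connectedComponentMk_supp_nontrivial⟩,
    SimpleGraph.ConnectedComponent.supp_ne_univ_of_not_reachable hnot, hadj.reachable⟩
end

section
/- Let (X, {R_0,...,R_d}) be a symmetric association scheme, let i ∈ {1,...,d}, and assume Γ = (X, R_i) is connected; let H be the unweighted distribution diagram of R_i. Then for every pair (a,b) ∈ R_j, the path-length distance from a to b in Γ equals the path-length distance from 0 to j in H. -/
/-!
In a symmetric scheme `p_{ij}^k > 0` iff `p_{ik}^j > 0`, so `k` and `l` are adjacent in `H` exactly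
when every `(x, b) ∈ R_k` has a `Γ`-neighbour `y` of `x` with `(y, b) ∈ R_l`. Hence recording the
class of `(x, b)` along a `Γ`-walk from `a` to `b` gives an `H`-walk from `j` to `0` that is no
longer (after dropping repetitions), and conversely every `H`-walk from `j` to `0` lifts, step by
step, to a `Γ`-walk of the same length from `a` to `b`.
-/

namespace SymAssocScheme

variable {X : Type*} [Fintype X] {d : ℕ} (A : SymAssocScheme X d)

lemma eq_zero_of_R_self {j : Fin (d + 1)} {a : X} (h : A.R j a a) : j = 0 :=
  (A.R_unique a a).unique h ((A.R_zero a a).mpr rfl)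

lemma graph_adj_of_R {i : Fin (d + 1)} (hi : i ≠ 0) {a c : X} (h : A.R i a c) :
    (A.graph i).Adj a c :=
  ⟨fun hac => hi (A.eq_zero_of_R_self (hac ▸ h)), h⟩

lemma exists_R_of_p_pos {i j k : Fin (d + 1)} (hp : 0 < A.p i j k) {a b : X}
    (hab : A.R k a b) : ∃ c, A.R i a c ∧ A.R j c b :=
  Set.nonempty_of_ncard_ne_zero (s := {c | A.R i a c ∧ A.R j c b})
    (by rw [A.p_spec i j k a b hab]; omega)

lemma p_pos_of_R {i j k : Fin (d + 1)} {a b c : X} (hab : A.R k a b) (hac : A.R i a c)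
    (hcb : A.R j c b) : 0 < A.p i j k := by
  rw [← A.p_spec i j k a b hab]
  exact (Set.ncard_pos (Set.toFinite _)).mpr ⟨c, hac, hcb⟩

lemma p_pos_comm {i j k : Fin (d + 1)} (h : 0 < A.p i j k) : 0 < A.p i k j := by
  obtain ⟨a, b, hab⟩ := A.R_nonempty k
  obtain ⟨c, hac, hcb⟩ := A.exists_R_of_p_pos h hab
  exact A.p_pos_of_R hcb (A.R_symm i a c hac) hab

lemma diagram_adj_iff {i j k : Fin (d + 1)} : (A.diagram i).Adj j k ↔ j ≠ k ∧ 0 < A.p i j k := by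
  refine ⟨fun ⟨hjk, hp⟩ => ⟨hjk, ?_⟩, fun ⟨hjk, hp⟩ => ⟨hjk, by omega⟩⟩
  rcases Nat.eq_zero_or_pos (A.p i j k) with h | h
  · exact A.p_pos_comm (j := k) (by omega)
  · exact h

lemma diagram_adj_of_R {i j k : Fin (d + 1)} (hjk : j ≠ k) {a b c : X} (hab : A.R k a b)
    (hac : A.R i a c) (hcb : A.R j c b) : (A.diagram i).Adj j k :=
  A.diagram_adj_iff.mpr ⟨hjk, A.p_pos_of_R hab hac hcb⟩

lemma exists_R_of_diagram_adj {i j k : Fin (d + 1)} (h : (A.diagram i).Adj j k) {a b : X}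
    (hab : A.R j a b) : ∃ c, A.R i a c ∧ A.R k c b :=
  A.exists_R_of_p_pos (A.p_pos_comm (A.diagram_adj_iff.mp h).2) hab

lemma exists_diagram_walk_length_le {i : Fin (d + 1)} {a b : X} (w : (A.graph i).Walk a b)
    {j : Fin (d + 1)} (hj : A.R j a b) : ∃ w' : (A.diagram i).Walk 0 j, w'.length ≤ w.length := by
  induction w generalizing j with
  | nil =>
    obtain rfl := A.eq_zero_of_R_self hj
    exact ⟨.nil, le_rfl⟩
  | @cons a c b hac w ih =>
    obtain ⟨j', hj', -⟩ := A.R_unique c b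
    obtain ⟨w', hw'⟩ := ih hj'
    rw [SimpleGraph.Walk.length_cons]
    by_cases hjj : j' = j
    · subst hjj
      exact ⟨w', by omega⟩
    · refine ⟨w'.concat (A.diagram_adj_of_R hjj hj hac.2 hj'), ?_⟩
      rw [SimpleGraph.Walk.length_concat]
      omega

lemma exists_graph_walk_length_le {i : Fin (d + 1)} (hi : i ≠ 0) {j k : Fin (d + 1)}
    (w : (A.diagram i).Walk j k) {a b : X} (hab : A.R j a b) :
    ∃ c, A.R k c b ∧ ∃ w' : (A.graph i).Walk a c, w'.length ≤ w.length := by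
  induction w generalizing a with
  | nil => exact ⟨a, hab, .nil, le_rfl⟩
  | cons hjm w ih =>
    obtain ⟨c', hac', hc'b⟩ := A.exists_R_of_diagram_adj hjm hab
    obtain ⟨c, hcb, w', hw'⟩ := ih hc'b
    refine ⟨c, hcb, .cons (A.graph_adj_of_R hi hac') w', ?_⟩
    rw [SimpleGraph.Walk.length_cons, SimpleGraph.Walk.length_cons]
    omega

lemma diagram_reachable_of_reachable {i j : Fin (d + 1)} {a b : X}
    (h : (A.graph i).Reachable a b) (hj : A.R j a b) : (A.diagram i).Reachable 0 j :=
  let ⟨w⟩ := h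
  ⟨(A.exists_diagram_walk_length_le w hj).choose⟩

lemma diagram_dist_le_graph_dist {i j : Fin (d + 1)} {a b : X} (h : (A.graph i).Reachable a b)
    (hj : A.R j a b) : (A.diagram i).dist 0 j ≤ (A.graph i).dist a b := by
  obtain ⟨w, hw⟩ := h.exists_walk_length_eq_dist
  obtain ⟨w', hw'⟩ := A.exists_diagram_walk_length_le w hj
  exact hw ▸ (SimpleGraph.dist_le w').trans hw'

lemma graph_dist_le_diagram_dist {i j : Fin (d + 1)} (hi : i ≠ 0) {a b : X}
    (h : (A.diagram i).Reachable 0 j) (hj : A.R j a b) :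
    (A.graph i).dist a b ≤ (A.diagram i).dist 0 j := by
  obtain ⟨w, hw⟩ := h.exists_walk_length_eq_dist
  obtain ⟨c, hcb, w', hw'⟩ := A.exists_graph_walk_length_le hi w.reverse hj
  obtain rfl : c = b := (A.R_zero c b).mp hcb
  rw [SimpleGraph.Walk.length_reverse, hw] at hw'
  exact (SimpleGraph.dist_le w').trans hw'

end SymAssocScheme

open SymAssocScheme in
/-- Lemma 3.4: if `Γ = (X, R_i)` is connected with unweighted distribution diagram
`H`, then for `(a,b) ∈ R_j`, the distance from `a` to `b` in `Γ` equals the distance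
from `0` to `j` in `H`. -/
theorem dist_eq_diagram_dist {X : Type*} [Fintype X] {d : ℕ}
    (A : SymAssocScheme X d) (i : Fin (d + 1)) (hi : i ≠ 0)
    (hconn : (A.graph i).Connected)
    (a b : X) (j : Fin (d + 1)) (hj : A.R j a b) :
    (A.graph i).dist a b = (A.diagram i).dist 0 j :=
  le_antisymm
    (A.graph_dist_le_diagram_dist hi (A.diagram_reachable_of_reachable (hconn a b) hj) hj)
    (A.diagram_dist_le_graph_dist (hconn a b) hj)
end

section
/- Let (X, {R_0,...,R_d}) be a symmetric association scheme, let i ∈ {1,...,d}, assume Γ = (X, R_i) is connected, and let H be the unweighted distribution diagram of R_i. If the induced subgraph H \ {0,i} is not connected, then for every a ∈ X the induced subgraph Γ \ a^⊥ is also disconnected; moreover, if j and k lie in distinct components of H \ {0,i}, then Γ \ a^⊥ contains no path from a vertex of R_j(a) to a vertex of R_k(a). -/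
/-! Fix `a` and send each `x` of `Γ \ a^⊥` to the index `j` with `(a, x) ∈ R_j`; this index lies
in `{1, …, d} \ {i}`. If `x ~ y` in `Γ` with `(a, x) ∈ R_j`, `(a, y) ∈ R_l`, then `y` witnesses
`p_{il}^j > 0`, so `j = l` or `j ~ l` in `H_i`. Hence the map sends walks of `Γ \ a^⊥` to walks of
`H_i \ {0, i}`, and it is onto because every `R_j(a)` is nonempty; so connectivity of `Γ \ a^⊥`
would force that of `H_i \ {0, i}`. -/

namespace SimpleGraph

variable {V W : Type*} {G : SimpleGraph V} {G' : SimpleGraph W} {f : V → W}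

theorem Reachable.map_of_eq_or_adj (hf : ∀ ⦃u v⦄, G.Adj u v → f u = f v ∨ G'.Adj (f u) (f v))
    {u v : V} (h : G.Reachable u v) : G'.Reachable (f u) (f v) := by
  rw [reachable_iff_reflTransGen] at h ⊢
  refine h.lift' f fun u v huv => show Relation.ReflTransGen G'.Adj (f u) (f v) from ?_
  rcases hf huv with heq | hadj
  · exact heq ▸ Relation.ReflTransGen.refl
  · exact .single hadj

theorem Connected.map_of_eq_or_adj (hf : ∀ ⦃u v⦄, G.Adj u v → f u = f v ∨ G'.Adj (f u) (f v))
    (hsurj : Function.Surjective f) (hG : G.Connected) : G'.Connected where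
  preconnected u' v' := by
    obtain ⟨u, rfl⟩ := hsurj u'
    obtain ⟨v, rfl⟩ := hsurj v'
    exact (hG u v).map_of_eq_or_adj hf
  nonempty := hG.nonempty.map f

end SimpleGraph

namespace SymAssocScheme

variable {X : Type*} [Fintype X] {d : ℕ} {A : SymAssocScheme X d}

/-- The vertex set of `Γ \ a^⊥`. -/
def farSet (A : SymAssocScheme X d) (i : Fin (d + 1)) (a : X) : Set X :=
  {x | x ≠ a ∧ ¬ (A.graph i).Adj a x}

/-- The vertex set of `H_i \ {0, i}`. -/
def farClasses (i : Fin (d + 1)) : Set (Fin (d + 1)) := {l | l ≠ 0 ∧ l ≠ i}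

theorem eq_of_R {j k : Fin (d + 1)} {a b : X} (hj : A.R j a b) (hk : A.R k a b) : j = k :=
  (A.R_unique a b).unique hj hk

noncomputable def classOf (A : SymAssocScheme X d) (a x : X) : Fin (d + 1) :=
  (A.R_unique a x).exists.choose

theorem R_classOf (A : SymAssocScheme X d) (a x : X) : A.R (A.classOf a x) a x :=
  (A.R_unique a x).exists.choose_spec

theorem classOf_eq_of_R {j : Fin (d + 1)} {a x : X} (h : A.R j a x) : A.classOf a x = j :=
  eq_of_R (A.R_classOf a x) h

-- `|R_j(a)| = p_{jj}^0` does not depend on `a`, and `R_j` is nonempty.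
theorem exists_R (j : Fin (d + 1)) (a : X) : ∃ x, A.R j a x := by
  have ncard_eq (b : X) : {c | A.R j b c ∧ A.R j c b}.ncard = A.p j j 0 :=
    A.p_spec j j 0 b b ((A.R_zero b b).mpr rfl)
  obtain ⟨b, c, hbc⟩ := A.R_nonempty j
  have hpos : 0 < A.p j j 0 := by
    rw [← ncard_eq b]
    exact (Set.ncard_pos (Set.toFinite _)).mpr ⟨c, hbc, A.R_symm _ _ _ hbc⟩
  rw [← ncard_eq a, Set.ncard_pos (Set.toFinite _)] at hpos
  obtain ⟨x, hx, -⟩ := hpos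
  exact ⟨x, hx⟩

theorem mem_farSet_iff {i j : Fin (d + 1)} {a x : X} (h : A.R j a x) :
    x ∈ A.farSet i a ↔ j ∈ farClasses i := by
  have hxa_iff : x = a ↔ j = 0 :=
    ⟨fun hxa => eq_of_R h ((A.R_zero a x).mpr hxa.symm),
      fun hj => ((A.R_zero a x).mp (hj ▸ h)).symm⟩
  show (x ≠ a ∧ ¬ (a ≠ x ∧ A.R i a x)) ↔ j ≠ 0 ∧ j ≠ i
  rw [ne_eq, hxa_iff]
  refine and_congr_right fun hj0 => ⟨fun hfar hji => hfar ⟨?_, hji ▸ h⟩,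
    fun hji hadj => hji (eq_of_R h hadj.2)⟩
  exact fun hax => hj0 (hxa_iff.mp hax.symm)

theorem eq_or_diagram_adj_of_adj {i j l : Fin (d + 1)} {a x y : X}
    (hxy : (A.graph i).Adj x y) (hj : A.R j a x) (hl : A.R l a y) :
    j = l ∨ (A.diagram i).Adj j l := by
  refine or_iff_not_imp_left.mpr fun hne => ⟨hne, ?_⟩
  have hp : 0 < A.p i l j := by
    rw [← A.p_spec i l j x a (A.R_symm _ _ _ hj)]
    exact (Set.ncard_pos (Set.toFinite _)).mpr ⟨y, hxy.2, A.R_symm _ _ _ hl⟩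
  omega

noncomputable def farClassOf (A : SymAssocScheme X d) (i : Fin (d + 1)) (a : X)
    (x : A.farSet i a) : farClasses i :=
  ⟨A.classOf a x, (mem_farSet_iff (A.R_classOf a x)).mp x.2⟩

theorem farClassOf_eq_of_R {i j : Fin (d + 1)} {a : X} {x : A.farSet i a} (hj : j ∈ farClasses i)
    (h : A.R j a x) : A.farClassOf i a x = ⟨j, hj⟩ :=
  Subtype.ext (classOf_eq_of_R h)

theorem farClassOf_surjective (i : Fin (d + 1)) (a : X) :
    Function.Surjective (A.farClassOf i a) := by
  rintro ⟨j, hj⟩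
  obtain ⟨x, hx⟩ := exists_R j a
  exact ⟨⟨x, (mem_farSet_iff hx).mpr hj⟩, farClassOf_eq_of_R hj hx⟩

theorem farClassOf_eq_or_adj_of_adj (i : Fin (d + 1)) (a : X) ⦃x y : A.farSet i a⦄
    (hxy : ((A.graph i).induce (A.farSet i a)).Adj x y) :
    A.farClassOf i a x = A.farClassOf i a y ∨
      ((A.diagram i).induce (farClasses i)).Adj (A.farClassOf i a x) (A.farClassOf i a y) :=
  (eq_or_diagram_adj_of_adj hxy (A.R_classOf a x) (A.R_classOf a y)).imp_left Subtype.ext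

end SymAssocScheme

open SymAssocScheme in
theorem diagram_disconnected_implies_local_disconnected_general {X : Type*} [Fintype X] {d : ℕ}
    (A : SymAssocScheme X d) (i : Fin (d + 1))
    (hH : ¬ ((A.diagram i).induce {j : Fin (d + 1) | j ≠ 0 ∧ j ≠ i}).Connected) :
    ∀ a : X,
      (¬ ((A.graph i).induce {x : X | x ≠ a ∧ ¬ (A.graph i).Adj a x}).Connected) ∧
      (∀ (j k : Fin (d + 1)) (hj : j ≠ 0 ∧ j ≠ i) (hk : k ≠ 0 ∧ k ≠ i),
        ¬ ((A.diagram i).induce {l : Fin (d + 1) | l ≠ 0 ∧ l ≠ i}).Reachable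
            ⟨j, hj⟩ ⟨k, hk⟩ →
        ∀ (x y : {x : X | x ≠ a ∧ ¬ (A.graph i).Adj a x}),
          A.R j a x.1 → A.R k a y.1 →
          ¬ ((A.graph i).induce {x : X | x ≠ a ∧ ¬ (A.graph i).Adj a x}).Reachable x y) := by
  intro a
  refine ⟨fun hconn => hH ?_, fun j k hj hk hjk x y hx hy hxy => hjk ?_⟩
  · exact hconn.map_of_eq_or_adj (farClassOf_eq_or_adj_of_adj i a) (farClassOf_surjective i a)
  · have hreach := hxy.map_of_eq_or_adj (farClassOf_eq_or_adj_of_adj i a)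
    rwa [farClassOf_eq_of_R hj hx, farClassOf_eq_of_R hk hy] at hreach

open SymAssocScheme in
/-- Proposition 3.5: if `H \ {0, i}` is disconnected, then for every `a ∈ X` the
graph `Γ \ a^⊥` is disconnected; moreover if `j` and `k` lie in distinct components
of `H \ {0, i}`, then `Γ \ a^⊥` contains no path from `R_j(a)` to `R_k(a)`. -/
theorem diagram_disconnected_implies_local_disconnected {X : Type*} [Fintype X] {d : ℕ}
    (A : SymAssocScheme X d) (i : Fin (d + 1)) (hi : i ≠ 0)
    (hconn : (A.graph i).Connected)
    (hH : ¬ ((A.diagram i).induce {j : Fin (d + 1) | j ≠ 0 ∧ j ≠ i}).Connected) :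
    ∀ a : X,
      (¬ ((A.graph i).induce {x : X | x ≠ a ∧ ¬ (A.graph i).Adj a x}).Connected) ∧
      (∀ (j k : Fin (d + 1)) (hj : j ≠ 0 ∧ j ≠ i) (hk : k ≠ 0 ∧ k ≠ i),
        ¬ ((A.diagram i).induce {l : Fin (d + 1) | l ≠ 0 ∧ l ≠ i}).Reachable
            ⟨j, hj⟩ ⟨k, hk⟩ →
        ∀ (x y : {x : X | x ≠ a ∧ ¬ (A.graph i).Adj a x}),
          A.R j a x.1 → A.R k a y.1 →
          ¬ ((A.graph i).induce {x : X | x ≠ a ∧ ¬ (A.graph i).Adj a x}).Reachable x y) :=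
  diagram_disconnected_implies_local_disconnected_general A i hH
end

section
/- Let (X, {R_0,...,R_d}) be a symmetric association scheme, let i ∈ {1,...,d}, assume Γ = (X, R_i) is connected, and let a ∈ X. If x and y lie in distinct connected components of the induced subgraph Γ \ a^⊥, then Γ(x) ∩ Γ(y) ⊆ Γ(a). -/
namespace SimpleGraph

theorem reachable_induce_of_adj_of_adj {V : Type*} {G : SimpleGraph V} {s : Set V} {x y c : V}
    (hx : x ∈ s) (hy : y ∈ s) (hc : c ∈ s) (hxc : G.Adj x c) (hcy : G.Adj c y) :
    (G.induce s).Reachable ⟨x, hx⟩ ⟨y, hy⟩ :=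
  (induce_adj.mpr hxc : (G.induce s).Adj ⟨x, hx⟩ ⟨c, hc⟩).reachable.trans
    (induce_adj.mpr hcy : (G.induce s).Adj ⟨c, hc⟩ ⟨y, hy⟩).reachable

end SimpleGraph

open SymAssocScheme in
theorem common_neighbors_subset_general {X : Type*} [Fintype X] {d : ℕ}
    (A : SymAssocScheme X d) (i : Fin (d + 1)) (a x y : X)
    (hx : x ∈ {z : X | z ≠ a ∧ ¬ (A.graph i).Adj a z})
    (hy : y ∈ {z : X | z ≠ a ∧ ¬ (A.graph i).Adj a z})
    (hsep : ¬ ((A.graph i).induce {z : X | z ≠ a ∧ ¬ (A.graph i).Adj a z}).Reachable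
        ⟨x, hx⟩ ⟨y, hy⟩) :
    (A.graph i).neighborSet x ∩ (A.graph i).neighborSet y ⊆
      (A.graph i).neighborSet a := by
  rintro c ⟨hxc, hyc⟩
  by_contra hac
  have hca : c ≠ a := by
    rintro rfl
    exact hx.2 hxc.symm
  exact hsep (SimpleGraph.reachable_induce_of_adj_of_adj hx hy ⟨hca, hac⟩ hxc hyc.symm)

open SymAssocScheme in
/-- Proposition 3.6: if `x` and `y` lie in distinct connected components of
`Γ \ a^⊥`, then `Γ(x) ∩ Γ(y) ⊆ Γ(a)`. -/
theorem common_neighbors_subset {X : Type*} [Fintype X] {d : ℕ}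
    (A : SymAssocScheme X d) (i : Fin (d + 1)) (hi : i ≠ 0)
    (hconn : (A.graph i).Connected) (a x y : X)
    (hx : x ∈ {z : X | z ≠ a ∧ ¬ (A.graph i).Adj a z})
    (hy : y ∈ {z : X | z ≠ a ∧ ¬ (A.graph i).Adj a z})
    (hsep : ¬ ((A.graph i).induce {z : X | z ≠ a ∧ ¬ (A.graph i).Adj a z}).Reachable
        ⟨x, hx⟩ ⟨y, hy⟩) :
    (A.graph i).neighborSet x ∩ (A.graph i).neighborSet y ⊆
      (A.graph i).neighborSet a :=
  common_neighbors_subset_general A i a x y hx hy hsep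
end

section
/- Let (X, {R_0,...,R_d}) be a symmetric association scheme and let Γ = (X, R_1) be connected with valency v_1 = p_{11}^0. Suppose Γ has diameter two, and let t be a positive integer with |X| > v_1(t−1)+2 and t ≠ v_1. Then Γ has vertex connectivity at least t+1; that is, every disconnecting set for Γ has size at least t+1. -/
open Finset

namespace SimpleGraph

variable {V : Type*} {G : SimpleGraph V}

theorem commonNeighbors_nonempty_of_ediam_le_two (h2 : G.ediam ≤ 2) {x y : V} (hne : x ≠ y)
    (hxy : ¬G.Adj x y) : (G.commonNeighbors x y).Nonempty := by
  have hle : G.edist x y ≤ 2 := edist_le_ediam.trans h2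
  have hgt : 1 < G.edist x y := by
    rw [← not_le, edist_le_one_iff_adj_or_eq]
    tauto
  exact (edist_eq_two_iff.1 (le_antisymm hle (Order.add_one_le_of_lt hgt))).2.2

structure IsSeparation (G : SimpleGraph V) (A T B : Finset V) : Prop where
  nonempty_left : A.Nonempty
  nonempty_right : B.Nonempty
  disjoint_left_right : Disjoint A B
  disjoint_left_sep : Disjoint A T
  disjoint_right_sep : Disjoint B T
  mem_or_mem_or_mem : ∀ x, x ∈ A ∨ x ∈ T ∨ x ∈ B
  not_adj : ∀ a ∈ A, ∀ b ∈ B, ¬G.Adj a b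

variable {A T B : Finset V} {a b c : V} {k ℓ : ℕ}

theorem IsSeparation.symm (h : G.IsSeparation A T B) : G.IsSeparation B T A where
  nonempty_left := h.nonempty_right
  nonempty_right := h.nonempty_left
  disjoint_left_right := h.disjoint_left_right.symm
  disjoint_left_sep := h.disjoint_right_sep
  disjoint_right_sep := h.disjoint_left_sep
  mem_or_mem_or_mem x := by have := h.mem_or_mem_or_mem x; tauto
  not_adj b hb a ha hba := h.not_adj a ha b hb hba.symm

theorem IsSeparation.exists_adj_adj (h : G.IsSeparation A T B) (h2 : G.ediam ≤ 2) (ha : a ∈ A)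
    (hb : b ∈ B) : ∃ c ∈ T, G.Adj a c ∧ G.Adj c b := by
  have hne : a ≠ b := fun hab => Finset.disjoint_left.1 h.disjoint_left_right ha (hab ▸ hb)
  obtain ⟨c, hac, hbc⟩ := commonNeighbors_nonempty_of_ediam_le_two h2 hne (h.not_adj a ha b hb)
  refine ⟨c, ?_, hac, hbc.symm⟩
  rcases h.mem_or_mem_or_mem c with hcA | hcT | hcB
  · exact absurd hbc.symm (h.not_adj c hcA b hb)
  · exact hcT
  · exact absurd hac (h.not_adj a ha c hcB)

theorem IsSeparation.exists_mem_adj (h : G.IsSeparation A T B) (h2 : G.ediam ≤ 2) (ha : a ∈ A) :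
    ∃ c ∈ T, G.Adj a c :=
  let ⟨_, hb⟩ := h.nonempty_right
  let ⟨c, hcT, hac, _⟩ := h.exists_adj_adj h2 ha hb
  ⟨c, hcT, hac⟩

variable [Fintype V] [DecidableEq V]

theorem IsSeparation.card_add_card_add_card (h : G.IsSeparation A T B) :
    #A + #T + #B = Fintype.card V := by
  have hAT_B : Disjoint (A ∪ T) B :=
    disjoint_union_left.2 ⟨h.disjoint_left_right, h.disjoint_right_sep.symm⟩
  rw [← card_union_of_disjoint h.disjoint_left_sep, ← card_union_of_disjoint hAT_B,
    ← card_univ]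
  congr 1
  exact eq_univ_of_forall fun x => by simpa [or_assoc] using h.mem_or_mem_or_mem x

variable [DecidableRel G.Adj]

theorem card_neighborFinset_inter_add_card_le {c : V} {S U : Finset V} (hSU : Disjoint S U)
    (hS : S ⊆ G.neighborFinset c) : #(G.neighborFinset c ∩ U) + #S ≤ G.degree c := by
  rw [← card_neighborFinset_eq_degree, add_comm,
    ← card_union_of_disjoint (hSU.mono_right inter_subset_right)]
  exact card_le_card (union_subset hS inter_subset_left)

theorem card_le_sq_add_one_of_ediam_le_two [Nonempty V] (hreg : G.IsRegularOfDegree k)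
    (h2 : G.ediam ≤ 2) : Fintype.card V ≤ k ^ 2 + 1 := by
  obtain ⟨a⟩ := ‹Nonempty V›
  have hcover : univ.erase a ⊆
      (G.neighborFinset a).biUnion fun c => insert c ((G.neighborFinset c).erase a) := by
    intro x hx
    obtain ⟨hxa, -⟩ := mem_erase.1 hx
    simp only [mem_biUnion, mem_insert, mem_erase, mem_neighborFinset]
    by_cases hax : G.Adj a x
    · exact ⟨x, hax, Or.inl rfl⟩
    · obtain ⟨c, hac, hxc⟩ := commonNeighbors_nonempty_of_ediam_le_two h2 (Ne.symm hxa) hax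
      exact ⟨c, hac, Or.inr ⟨hxa, hxc.symm⟩⟩
  have hbound : ∀ c ∈ G.neighborFinset a, #(insert c ((G.neighborFinset c).erase a)) ≤ k := by
    intro c hc
    have hac : a ∈ G.neighborFinset c := by simpa [adj_comm] using hc
    have := card_insert_le c ((G.neighborFinset c).erase a)
    rw [card_erase_of_mem hac, card_neighborFinset_eq_degree, hreg c] at this
    have : 0 < k := hreg c ▸ card_pos.2 ⟨a, hac⟩
    omega
  have := (card_le_card hcover).trans (card_biUnion_le_card_mul _ _ _ hbound)
  rw [card_erase_of_mem (mem_univ a), card_univ, card_neighborFinset_eq_degree, hreg a] at this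
  rw [sq]
  omega

/-- Double counting the edges between `Tᶜ` and `T` gives `2 |Tᶜ| ≤ k |T|`; the bound then
amounts to `(k - 2) (|T| - 2) ≥ 0`. -/
theorem card_le_of_forall_two_le_card_neighborFinset_inter (hreg : G.IsRegularOfDegree k)
    {T : Finset V} (hT : ∀ x ∉ T, 2 ≤ #(G.neighborFinset x ∩ T)) (hk : #T ≤ k) :
    Fintype.card V ≤ k * (#T - 1) + 2 := by
  have hinter : ∀ x, G.neighborFinset x ∩ T = T.bipartiteAbove G.Adj x := fun x => by
    ext y; simp [bipartiteAbove, and_comm]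
  have hcount : #Tᶜ * 2 ≤ #T * k := by
    refine card_mul_le_card_mul G.Adj (fun x hx => hinter x ▸ hT x (mem_compl.1 hx)) fun c _ => ?_
    rw [← hreg c, ← card_neighborFinset_eq_degree]
    exact card_le_card fun x hx => by simpa [bipartiteBelow, adj_comm] using (mem_filter.1 hx).2
  rw [card_compl] at hcount
  by_cases hT2 : 2 ≤ #T
  · obtain ⟨s, hs⟩ : ∃ s, #T = s + 2 := ⟨#T - 2, by omega⟩
    obtain ⟨j, rfl⟩ : ∃ j, k = j + 2 := ⟨k - 2, by omega⟩
    obtain ⟨m, hm⟩ := Nat.exists_eq_add_of_le (card_le_univ T)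
    rw [hm, hs, Nat.add_sub_cancel_left] at hcount
    rw [hm, hs, show s + 2 - 1 = s + 1 by omega]
    rw [hs] at hk
    nlinarith
  · have hTc : Tᶜ = ∅ := eq_empty_of_forall_notMem fun x hx =>
      hT2 ((hT x (mem_compl.1 hx)).trans (card_le_card inter_subset_right))
    have := card_compl T
    rw [hTc, card_empty] at this
    omega

theorem IsSeparation.degree_add_one_le (h : G.IsSeparation A T B) (ha : a ∈ A) :
    G.degree a + 1 ≤ #A + #(G.neighborFinset a ∩ T) := by
  have hsub : G.neighborFinset a ⊆ A.erase a ∪ (G.neighborFinset a ∩ T) := by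
    intro x hx
    rw [mem_neighborFinset] at hx
    rcases h.mem_or_mem_or_mem x with hxA | hxT | hxB
    · exact mem_union_left _ (mem_erase.2 ⟨hx.ne', hxA⟩)
    · exact mem_union_right _ (mem_inter.2 ⟨(G.mem_neighborFinset _ _).2 hx, hxT⟩)
    · exact absurd hx (h.not_adj a ha x hxB)
  have := (card_le_card hsub).trans (card_union_le _ _)
  rw [card_erase_of_mem ha, card_neighborFinset_eq_degree] at this
  have := card_pos.2 ⟨a, ha⟩
  omega

theorem IsSeparation.subset_biUnion (h : G.IsSeparation A T B) (h2 : G.ediam ≤ 2) (hb : b ∈ B) :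
    A ⊆ (G.neighborFinset b ∩ T).biUnion fun c => G.neighborFinset c ∩ A := by
  intro a ha
  obtain ⟨c, hcT, hac, hcb⟩ := h.exists_adj_adj h2 ha hb
  simp only [mem_biUnion, mem_inter, mem_neighborFinset]
  exact ⟨c, ⟨hcb.symm, hcT⟩, hac.symm, ha⟩

theorem IsSeparation.adj_of_neighborFinset_inter_eq_singleton (h : G.IsSeparation A T B)
    (h2 : G.ediam ≤ 2) (ha : a ∈ A) (hc : G.neighborFinset a ∩ T = {c}) (hb : b ∈ B) :
    G.Adj c b := by
  obtain ⟨c', hc'T, hac', hc'b⟩ := h.exists_adj_adj h2 ha hb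
  have : c' ∈ G.neighborFinset a ∩ T :=
    mem_inter.2 ⟨(G.mem_neighborFinset _ _).2 hac', hc'T⟩
  rw [hc, mem_singleton] at this
  rwa [this] at hc'b

/-- `A` is covered by the neighbourhoods of the fewer than `|T|` vertices of `N(b) ∩ T`; among
them `c` has at most `k - |B|` neighbours in `A` and the others, which also see `b`, at most
`k - 1`. -/
theorem IsSeparation.card_le_of_card_neighborFinset_inter_lt (h : G.IsSeparation A T B)
    (hreg : G.IsRegularOfDegree k) (h2 : G.ediam ≤ 2) (hcT : c ∈ T)
    (hcB : ∀ y ∈ B, G.Adj c y) (hb : b ∈ B) (hbT : #(G.neighborFinset b ∩ T) < #T) :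
    Fintype.card V ≤ k * (#T - 1) + 2 := by
  set N := G.neighborFinset b ∩ T
  have hcN : c ∈ N := mem_inter.2 ⟨(G.mem_neighborFinset _ _).2 (hcB b hb).symm, hcT⟩
  have hc : #(G.neighborFinset c ∩ A) + #B ≤ k :=
    hreg c ▸ card_neighborFinset_inter_add_card_le h.disjoint_left_right.symm
      fun y hy => (G.mem_neighborFinset _ _).2 (hcB y hy)
  have hbA : Disjoint {b} A :=
    disjoint_singleton_left.2 fun hbA => Finset.disjoint_left.1 h.disjoint_left_right hbA hb
  have hother : ∀ c' ∈ N.erase c, #(G.neighborFinset c' ∩ A) ≤ k - 1 := by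
    intro c' hc'
    have hbc' : G.Adj b c' := (G.mem_neighborFinset _ _).1 (mem_inter.1 (mem_of_mem_erase hc')).1
    have := hreg c' ▸ card_neighborFinset_inter_add_card_le hbA
      (singleton_subset_iff.2 ((G.mem_neighborFinset _ _).2 hbc'.symm))
    rw [card_singleton] at this
    omega
  have hA : #A ≤ #(G.neighborFinset c ∩ A) + #(N.erase c) * (k - 1) := calc
    #A ≤ ∑ c' ∈ N, #(G.neighborFinset c' ∩ A) :=
      (card_le_card (h.subset_biUnion h2 hb)).trans card_biUnion_le
    _ = #(G.neighborFinset c ∩ A) + ∑ c' ∈ N.erase c, #(G.neighborFinset c' ∩ A) :=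
      (add_sum_erase _ _ hcN).symm
    _ ≤ _ := by
      gcongr
      simpa using sum_le_card_nsmul _ _ _ hother
  rw [card_erase_of_mem hcN] at hA
  have hk : 0 < k := hreg c ▸ (G.degree_pos_iff_exists_adj c).2 ⟨b, hcB b hb⟩
  have hN : 0 < #N := card_pos.2 ⟨c, hcN⟩
  rw [← h.card_add_card_add_card]
  obtain ⟨j, rfl⟩ : ∃ j, k = j + 1 := ⟨k - 1, by omega⟩
  obtain ⟨m, hm⟩ : ∃ m, #N = m + 1 := ⟨#N - 1, by omega⟩
  obtain ⟨r, hr⟩ : ∃ r, #T = m + 2 + r := ⟨#T - (m + 2), by omega⟩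
  rw [hm, Nat.add_sub_cancel, Nat.add_sub_cancel] at hA
  rw [hr, show m + 2 + r - 1 = m + 1 + r by omega]
  nlinarith

/-- Every vertex of `T` sees all of `B`, hence at most `k - |B|` vertices of `A`, while
`|B| ≥ k + 1 - |T|` by the degree of a vertex of `B`. -/
theorem IsSeparation.card_le_of_forall_subset_neighborFinset (h : G.IsSeparation A T B)
    (hreg : G.IsRegularOfDegree k) (h2 : G.ediam ≤ 2)
    (hBT : ∀ b ∈ B, T ⊆ G.neighborFinset b) (hkA : k ≤ #A) (hk : #T + 2 ≤ k) :
    Fintype.card V ≤ k * (#T - 1) + 2 := by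
  obtain ⟨b, hb⟩ := h.nonempty_right
  have hTc : ∀ c ∈ T, #(G.neighborFinset c ∩ A) + #B ≤ k := fun c hc =>
    hreg c ▸ card_neighborFinset_inter_add_card_le h.disjoint_left_right.symm fun y hy =>
      (G.mem_neighborFinset _ _).2 ((G.mem_neighborFinset _ _).1 (hBT y hy hc)).symm
  have hA : #A ≤ #T * (k - #B) := by
    have hcover := h.subset_biUnion h2 hb
    rw [inter_eq_right.2 (hBT b hb)] at hcover
    refine (card_le_card hcover).trans (card_biUnion_le_card_mul _ _ _ fun c hc => ?_)
    have := hTc c hc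
    omega
  have hB : k + 1 ≤ #B + #T := by
    have := h.symm.degree_add_one_le hb
    rw [hreg b] at this
    have := card_le_card (inter_subset_right : G.neighborFinset b ∩ T ⊆ T)
    omega
  rw [← h.card_add_card_add_card]
  obtain ⟨u, hu⟩ : ∃ u, k = #B + u := ⟨k - #B, by
    by_contra hlt
    have : k - #B = 0 := by omega
    rw [this, mul_zero] at hA
    omega⟩
  rw [hu, Nat.add_sub_cancel_left] at hA
  by_cases hT3 : 3 ≤ #T
  · obtain ⟨s, hs⟩ : ∃ s, #T = s + 3 := ⟨#T - 3, by omega⟩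
    rw [hs] at hA hB hk ⊢
    rw [show s + 3 - 1 = s + 2 by omega]
    have hu' : u ≤ s + 2 := by omega
    nlinarith [Nat.mul_le_mul_left (s + 2) hu']
  · have : #T * u ≤ 2 * 1 := Nat.mul_le_mul (by omega) (by omega)
    omega

/-- Two adjacent vertices of `B` have all of `T` as common neighbours, so `ℓ ≥ |T| = k - 1`.
Hence a vertex `c ∈ T` with a neighbour in `A` is adjacent to every other neighbour of any
`b ∈ B`, and so to `T \ {c}`, to `B` and to a vertex of `A`: more than `k` vertices. -/
theorem IsSeparation.card_add_one_ne (h : G.IsSeparation A T B) (hreg : G.IsRegularOfDegree k)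
    (hℓ : ∀ x y, G.Adj x y → Fintype.card (G.commonNeighbors x y) = ℓ) (h2 : G.ediam ≤ 2)
    (hBT : ∀ b ∈ B, T ⊆ G.neighborFinset b) : #T + 1 ≠ k := by
  rintro rfl
  have hℓ' : ∀ x y, G.Adj x y → #(G.neighborFinset x ∩ G.neighborFinset y) = ℓ := by
    intro x y hxy
    rw [← hℓ x y hxy, ← Set.toFinset_card]
    congr 1
    ext z
    simp [mem_commonNeighbors]
  obtain ⟨b, hb⟩ := h.nonempty_right
  obtain ⟨b', hb'N, hb'T⟩ := exists_mem_notMem_of_card_lt_card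
    (show #T < #(G.neighborFinset b) by rw [card_neighborFinset_eq_degree, hreg b]; omega)
  have hbb' : G.Adj b b' := (G.mem_neighborFinset _ _).1 hb'N
  have hb'B : b' ∈ B := by
    rcases h.mem_or_mem_or_mem b' with h' | h' | h'
    · exact absurd hbb'.symm (h.not_adj b' h' b hb)
    · exact absurd h' hb'T
    · exact h'
  have hTℓ : #T ≤ ℓ :=
    hℓ' b b' hbb' ▸ card_le_card (subset_inter (hBT b hb) (hBT b' hb'B))
  obtain ⟨a, ha⟩ := h.nonempty_left
  obtain ⟨c, hcT, hac⟩ := h.exists_mem_adj h2 ha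
  have hbc : G.Adj b c := (G.mem_neighborFinset _ _).1 (hBT b hb hcT)
  have hNb : (G.neighborFinset b).erase c ⊆ G.neighborFinset c := by
    have hsub : G.neighborFinset b ∩ G.neighborFinset c ⊆ (G.neighborFinset b).erase c :=
      fun x hx => mem_erase.2
        ⟨((G.mem_neighborFinset _ _).1 (mem_inter.1 hx).2).ne', (mem_inter.1 hx).1⟩
    have heq := eq_of_subset_of_card_le hsub (by
      rw [card_erase_of_mem ((G.mem_neighborFinset _ _).2 hbc), card_neighborFinset_eq_degree,
        hreg b, hℓ' b c hbc]
      omega)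
    exact heq ▸ inter_subset_right
  have hSA : Disjoint (B ∪ T.erase c) A :=
    disjoint_union_left.2 ⟨h.disjoint_left_right.symm,
      (h.disjoint_left_sep.symm.mono_left (erase_subset c T))⟩
  have hSc : B ∪ T.erase c ⊆ G.neighborFinset c := by
    refine union_subset (fun y hy => ?_) fun x hx => ?_
    · exact (G.mem_neighborFinset _ _).2 ((G.mem_neighborFinset _ _).1 (hBT y hy hcT)).symm
    · obtain ⟨hxc, hxT⟩ := mem_erase.1 hx
      exact hNb (mem_erase.2 ⟨hxc, hBT b hb hxT⟩)
  have hcount := card_neighborFinset_inter_add_card_le hSA hSc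
  rw [card_union_of_disjoint (h.disjoint_right_sep.mono_right (erase_subset c T)),
    card_erase_of_mem hcT, hreg c] at hcount
  have hA : 0 < #(G.neighborFinset c ∩ A) :=
    card_pos.2 ⟨a, mem_inter.2 ⟨(G.mem_neighborFinset _ _).2 hac.symm, ha⟩⟩
  have hB : #T + 1 + 1 ≤ #B + #T := by
    have := h.symm.degree_add_one_le hb
    rw [hreg b] at this
    have := card_le_card (inter_subset_right : G.neighborFinset b ∩ T ⊆ T)
    omega
  omega

theorem IsSeparation.card_le (h : G.IsSeparation A T B) (hreg : G.IsRegularOfDegree k)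
    (hℓ : ∀ x y, G.Adj x y → Fintype.card (G.commonNeighbors x y) = ℓ) (h2 : G.ediam ≤ 2)
    (hk : #T < k) : Fintype.card V ≤ k * (#T - 1) + 2 := by
  by_cases hT2 : ∀ x ∉ T, 2 ≤ #(G.neighborFinset x ∩ T)
  · exact card_le_of_forall_two_le_card_neighborFinset_inter hreg hT2 hk.le
  push Not at hT2
  obtain ⟨x, hxT, hx⟩ := hT2
  wlog hxA : x ∈ A generalizing A B
  · refine this h.symm ?_
    have := h.mem_or_mem_or_mem x
    tauto
  obtain ⟨c, hc⟩ : ∃ c, G.neighborFinset x ∩ T = {c} := by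
    obtain ⟨c, hcT, hxc⟩ := h.exists_mem_adj h2 hxA
    have : 0 < #(G.neighborFinset x ∩ T) :=
      card_pos.2 ⟨c, mem_inter.2 ⟨(G.mem_neighborFinset _ _).2 hxc, hcT⟩⟩
    exact card_eq_one.1 (by omega)
  have hcT : c ∈ T := (mem_inter.1 (hc ▸ mem_singleton_self c)).2
  have hcB : ∀ y ∈ B, G.Adj c y := fun y hy =>
    h.adj_of_neighborFinset_inter_eq_singleton h2 hxA hc hy
  by_cases hBT : ∃ b ∈ B, #(G.neighborFinset b ∩ T) < #T
  · obtain ⟨b, hb, hbT⟩ := hBT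
    exact h.card_le_of_card_neighborFinset_inter_lt hreg h2 hcT hcB hb hbT
  push Not at hBT
  have hBT' : ∀ b ∈ B, T ⊆ G.neighborFinset b := fun b hb =>
    eq_of_subset_of_card_le inter_subset_right (hBT b hb) ▸ inter_subset_left
  have hkA : k ≤ #A := by
    have := h.degree_add_one_le hxA
    rwa [hc, card_singleton, hreg x, Nat.add_le_add_iff_right] at this
  have hk2 : #T + 2 ≤ k := by
    have := h.card_add_one_ne hreg hℓ h2 hBT'
    omega
  exact h.card_le_of_forall_subset_neighborFinset hreg h2 hBT' hkA hk2

theorem exists_isSeparation {T : Finset V} (hT : ¬(G.induce (↑T : Set V)ᶜ).Connected)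
    (hne : ∃ x, x ∉ T) : ∃ A B, G.IsSeparation A T B := by
  set H := G.induce (↑T : Set V)ᶜ
  obtain ⟨x, hx⟩ := hne
  obtain ⟨u, w, huw⟩ : ∃ u w, ¬H.Reachable u w := by
    by_contra! hreach
    exact hT (connected_iff H |>.2 ⟨hreach, ⟨⟨x, hx⟩⟩⟩)
  let A := univ.filter fun y => ∃ hy : y ∈ (↑T : Set V)ᶜ, H.Reachable u ⟨y, hy⟩
  have hAT : Disjoint A T := Finset.disjoint_left.2 fun y hy => (mem_filter.1 hy).2.1
  refine ⟨A, (A ∪ T)ᶜ,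
    { nonempty_left := ⟨u, mem_filter.2 ⟨mem_univ _, u.2, .rfl⟩⟩
      nonempty_right := ⟨w, ?_⟩
      disjoint_left_right :=
        disjoint_compl_right.mono_right (compl_subset_compl.2 subset_union_left)
      disjoint_left_sep := hAT
      disjoint_right_sep :=
        disjoint_compl_left.mono_left (compl_subset_compl.2 subset_union_right)
      mem_or_mem_or_mem := fun y => ?_
      not_adj := fun a ha b hb hab => ?_ }⟩
  · simp only [mem_compl, mem_union, not_or]
    refine ⟨fun hwA => huw ?_, w.2⟩
    obtain ⟨-, _, hreach⟩ := mem_filter.1 hwA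
    exact hreach
  · simp only [mem_compl, mem_union]
    tauto
  · obtain ⟨-, _, hreach⟩ := mem_filter.1 ha
    have hbT : b ∈ (↑T : Set V)ᶜ := by simp_all
    refine (mem_compl.1 hb) (mem_union_left _ (mem_filter.2 ⟨mem_univ _, hbT, ?_⟩))
    exact hreach.trans (Adj.reachable (G := H) hab)

theorem card_le_of_not_connected_induce_compl (hreg : G.IsRegularOfDegree k)
    (hℓ : ∀ x y, G.Adj x y → Fintype.card (G.commonNeighbors x y) = ℓ) (h2 : G.ediam ≤ 2)
    {T : Finset V} (hT : ¬(G.induce (↑T : Set V)ᶜ).Connected) (hk : #T < k) :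
    Fintype.card V ≤ k * (#T - 1) + 2 := by
  by_cases hne : ∃ x, x ∉ T
  · obtain ⟨A, B, h⟩ := exists_isSeparation hT hne
    exact h.card_le hreg hℓ h2 hk
  · push Not at hne
    rw [← card_univ, ← eq_univ_of_forall hne]
    have := Nat.le_mul_of_pos_left (#T - 1) (by omega : 0 < k)
    omega

end SimpleGraph

namespace SymAssocScheme

open SimpleGraph

variable {X : Type*} [Fintype X] {d : ℕ} (A : SymAssocScheme X d) {i : Fin (d + 1)}

theorem ne_of_R (hi : i ≠ 0) {a b : X} (h : A.R i a b) : a ≠ b := by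
  rintro rfl
  exact hi ((A.R_unique a a).unique h ((A.R_zero a a).2 rfl))

theorem graph_adj (hi : i ≠ 0) {a b : X} : (A.graph i).Adj a b ↔ A.R i a b :=
  ⟨And.right, fun h => ⟨A.ne_of_R hi h, h⟩⟩

theorem isRegularOfDegree_graph [DecidableRel (A.graph i).Adj] (hi : i ≠ 0) :
    (A.graph i).IsRegularOfDegree (A.p i i 0) := by
  intro x
  rw [← card_neighborSet_eq_degree, ← Nat.card_eq_fintype_card, Nat.card_coe_set_eq,
    ← A.p_spec i i 0 x x ((A.R_zero x x).2 rfl)]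
  congr 1
  ext c
  simp only [mem_neighborSet, A.graph_adj hi, Set.mem_ofPred_eq]
  exact ⟨fun h => ⟨h, A.R_symm _ _ _ h⟩, And.left⟩

theorem card_commonNeighbors_graph [DecidableRel (A.graph i).Adj] (hi : i ≠ 0) {x y : X}
    (hxy : (A.graph i).Adj x y) :
    Fintype.card ((A.graph i).commonNeighbors x y) = A.p i i i := by
  rw [← Nat.card_eq_fintype_card, Nat.card_coe_set_eq,
    ← A.p_spec i i i x y ((A.graph_adj hi).1 hxy)]
  congr 1
  ext c
  simp only [mem_commonNeighbors, A.graph_adj hi, Set.mem_ofPred_eq]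
  exact ⟨fun h => ⟨h.1, A.R_symm _ _ _ h.2⟩, fun h => ⟨h.1, A.R_symm _ _ _ h.2⟩⟩

end SymAssocScheme

open SymAssocScheme in
theorem connectivity_diam_two_general {X : Type*} [Fintype X] {d : ℕ} (hd : 0 < d)
    (A : SymAssocScheme X d) (hconn : (A.graph 1).Connected)
    (hdiam : (A.graph 1).diam = 2)
    (t : ℕ) (htv : t ≠ A.p 1 1 0)
    (hcard : A.p 1 1 0 * (t - 1) + 2 < Fintype.card X) :
    ∀ T : Set X, ¬ ((A.graph 1).induce Tᶜ).Connected → t + 1 ≤ T.ncard := by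
  classical
  intro T hT
  obtain ⟨T, rfl⟩ := T.toFinite.exists_finset_coe
  rw [Set.ncard_coe_finset]
  by_contra! hTt
  have h10 : (1 : Fin (d + 1)) ≠ 0 := by
    have : NeZero d := ⟨hd.ne'⟩
    exact Fin.one_pos'.ne'
  have hreg := A.isRegularOfDegree_graph h10
  have h2 : (A.graph 1).ediam ≤ 2 := by
    rw [← ENat.natCast_toNat (SimpleGraph.ediam_ne_top_of_diam_ne_zero (by omega))]
    exact_mod_cast hdiam.le
  rcases htv.lt_or_gt with htk | hkt
  · have hbound := SimpleGraph.card_le_of_not_connected_induce_compl hreg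
      (fun _ _ => A.card_commonNeighbors_graph h10) h2 hT (by omega)
    have hmono := Nat.mul_le_mul_left (A.p 1 1 0) (Nat.sub_le_sub_right (Nat.le_of_lt_succ hTt) 1)
    omega
  · have : Nonempty X := hconn.nonempty
    have hmoore := SimpleGraph.card_le_sq_add_one_of_ediam_le_two hreg h2
    have hmono := Nat.mul_le_mul_left (A.p 1 1 0) (Nat.le_sub_one_of_lt hkt)
    rw [sq] at hmoore
    omega

open SymAssocScheme in
/-- Theorem 5.8: let `Γ = (X, R_1)` be a connected basis relation of valency
`v_1 = p_{11}^0` and diameter two. If `|X| > v_1 (t - 1) + 2` and `t ≠ v_1`, then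
`Γ` has vertex connectivity at least `t + 1`: every disconnecting set has size at
least `t + 1`. -/
theorem connectivity_diam_two {X : Type*} [Fintype X] {d : ℕ} (hd : 0 < d)
    (A : SymAssocScheme X d) (hconn : (A.graph 1).Connected)
    (hdiam : (A.graph 1).diam = 2)
    (t : ℕ) (ht : 0 < t) (htv : t ≠ A.p 1 1 0)
    (hcard : A.p 1 1 0 * (t - 1) + 2 < Fintype.card X) :
    ∀ T : Set X, ¬ ((A.graph 1).induce Tᶜ).Connected → t + 1 ≤ T.ncard :=
  connectivity_diam_two_general hd A hconn hdiam t htv hcard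
end
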